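/- Let R_0(z) = (15z³+3)/(3z²(5+z³)). There exist real numbers q₀ and q_∞ with 0 < q₀ < 1 < q_∞ such that R_0(q₀) = q_∞ and R_0(q_∞) = q₀. (The map R_0 has a real period-two cycle {q₀, q_∞} on the positive real axis, straddling the super-attracting fixed point 1.) -/
import Mathlib


/-- The real restriction of the rational map `R_0(x) = (15x³+3)/(3x²(5+x³))`. -/
noncomputable def R0R (x : ℝ) : ℝ := (15*x^3 + 3)/(3*x^2*(5 + x^3))

lemma R0R_pos {x : ℝ} (hx : 0 < x) : 0 < R0R x := by
  unfold R0R
  apply div_pos <;> positivity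

lemma R0R_gt_one {x : ℝ} (hx : 0 < x) (hx1 : x < 1) : 1 < R0R x := by
  unfold R0R
  rw [lt_div_iff₀ (by positivity)]
  have key : 0 < 3*(1-x)^3*(x^2+3*x+1) := by
    have : 0 < 1 - x := by linarith
    positivity
  nlinarith [key]

lemma R0R_contOn : ContinuousOn R0R {x : ℝ | 0 < x} := by
  unfold R0R
  apply ContinuousOn.div (by fun_prop) (by fun_prop)
  intro x hx
  have : (0:ℝ) < x := hx
  positivity

/-- `R_0` has a real period-two cycle `{q₀, q_∞}` on the positive real axis with
`0 < q₀ < 1 < q_∞`. -/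
theorem stmt_19 : ∃ q₀ qinf : ℝ, 0 < q₀ ∧ q₀ < 1 ∧ 1 < qinf ∧
    R0R q₀ = qinf ∧ R0R qinf = q₀ := by
  set f : ℝ → ℝ := fun x => R0R (R0R x) - x with hf
  have hsub : Set.Icc (1/5 : ℝ) (1/4) ⊆ {x : ℝ | 0 < x} := by
    intro x hx; exact lt_of_lt_of_le (by norm_num) hx.1
  have hcont : ContinuousOn f (Set.Icc (1/5 : ℝ) (1/4)) := by
    apply ContinuousOn.sub _ continuousOn_id
    apply (R0R_contOn.comp (R0R_contOn.mono hsub))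
    intro x hx
    exact R0R_pos (hsub hx)
  have hivt := intermediate_value_Icc (by norm_num : (1/5:ℝ) ≤ 1/4) hcont
  have h0 : (0:ℝ) ∈ Set.Icc (f (1/5)) (f (1/4)) := by
    constructor <;> · simp only [hf, R0R]; norm_num
  obtain ⟨c, hc, hfc⟩ := hivt h0
  have hc0 : 0 < c := lt_of_lt_of_le (by norm_num) hc.1
  have hc1 : c < 1 := lt_of_le_of_lt hc.2 (by norm_num)
  refine ⟨c, R0R c, hc0, hc1, R0R_gt_one hc0 hc1, rfl, ?_⟩
  have : R0R (R0R c) - c = 0 := hfc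
  linarith
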